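/- arXiv:1508.00505 — 3 statements merged into one kernel-verified Lean document; each statement's English description precedes it below -/
import Mathlib

section
/- Let N ≥ 1, let S₁, S₂ be symmetric real N×N matrices, let M be a symmetric positive definite real N×N matrix, let τ₁, τ₂ > 0, Δt > 0, and let F : ℝᴺ × ℝᴺ → ℝ be continuously differentiable. Suppose the vectors (u, v) and (u⁺, v⁺) in ℝᴺ × ℝᴺ satisfy the average vector field (AVF) scheme: τ₁ M (u⁺ - u) = Δt [ -S₁ (u⁺ + u)/2 + ∫₀¹ ∇_u F((1-ξ)(u,v) + ξ(u⁺,v⁺)) dξ ] and τ₂ M (v⁺ - v) = Δt [ -S₂ (v⁺ + v)/2 - ∫₀¹ ∇_v F((1-ξ)(u,v) + ξ(u⁺,v⁺)) dξ ]. Define the discrete energy E(u,v) = ½ uᵀS₁u - ½ vᵀS₂v - F(u,v). Then exactly E(u⁺, v⁺) - E(u, v) = -(τ₁/Δt) (u⁺-u)ᵀ M (u⁺-u) + (τ₂/Δt) (v⁺-v)ᵀ M (v⁺-v). -/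
open Matrix

/-! Pair the `u`-equation with `u⁺ - u` and the `v`-equation with `v⁺ - v`. By symmetry of
`S₁, S₂` the stiffness terms become differences of the quadratic energies, and the averaged
gradients pair to `∫₀¹ dF(γ ξ) (γ') dξ = F(u⁺, v⁺) - F(u, v)`, the fundamental theorem of calculus
along the segment `γ` from `(u, v)` to `(u⁺, v⁺)`. -/

theorem integral_fderiv_segment_eq_sub {E G : Type*} [NormedAddCommGroup E] [NormedSpace ℝ E]
    [NormedAddCommGroup G] [NormedSpace ℝ G] [CompleteSpace G] {F : E → G}
    (hF : ContDiff ℝ 1 F) (a b : E) :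
    ∫ ξ in (0 : ℝ)..1, fderiv ℝ F ((1 - ξ) • a + ξ • b) (b - a) = F b - F a := by
  have hγ : ∀ ξ : ℝ, HasDerivAt (fun t : ℝ => (1 - t) • a + t • b) (b - a) ξ := fun ξ =>
    (((hasDerivAt_id ξ).const_sub 1).smul_const a |>.add
      ((hasDerivAt_id ξ).smul_const b)).congr_deriv (by simp [neg_add_eq_sub])
  have hcont : Continuous fun ξ : ℝ => fderiv ℝ F ((1 - ξ) • a + ξ • b) (b - a) :=
    ((hF.continuous_fderiv one_ne_zero).comp (by fun_prop)).clm_apply continuous_const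
  simpa using intervalIntegral.integral_eq_sub_of_hasDerivAt
    (fun ξ _ => (hF.differentiable one_ne_zero _).hasFDerivAt.comp_hasDerivAt ξ (hγ ξ))
    (hcont.intervalIntegrable 0 1)

theorem continuous_of_fderiv_comp_eq_dotProduct {E ι : Type*} [NormedAddCommGroup E]
    [NormedSpace ℝ E] [Fintype ι] {F : E → ℝ} (hF : ContDiff ℝ 1 F) (L : (ι → ℝ) →L[ℝ] E)
    {G : E → ι → ℝ} (hG : ∀ p w, fderiv ℝ F p (L w) = G p ⬝ᵥ w) : Continuous G := by
  classical
  have hG' : G = fun p i => fderiv ℝ F p (L (Pi.single i 1)) := by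
    ext p i
    rw [hG, dotProduct_single, mul_one]
  rw [hG']
  exact continuous_pi fun i => (hF.continuous_fderiv one_ne_zero).clm_apply continuous_const

theorem intervalIntegral_dotProduct {ι : Type*} [Fintype ι] {g : ℝ → ι → ℝ} {a b : ℝ}
    (hg : IntervalIntegrable g MeasureTheory.volume a b) (w : ι → ℝ) :
    ∫ ξ in a..b, w ⬝ᵥ g ξ = w ⬝ᵥ ∫ ξ in a..b, g ξ :=
  (LinearMap.toContinuousLinearMap (dotProductBilin ℝ ℝ w)).intervalIntegral_comp_comm hg

theorem Matrix.IsSymm.sub_dotProduct_mulVec_add {n R : Type*} [Fintype n] [CommRing R]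
    {S : Matrix n n R} (hS : S.IsSymm) (x y : n → R) :
    (x - y) ⬝ᵥ S *ᵥ (x + y) = x ⬝ᵥ S *ᵥ x - y ⬝ᵥ S *ᵥ y := by
  have hxy : x ⬝ᵥ S *ᵥ y = y ⬝ᵥ S *ᵥ x := by
    rw [dotProduct_mulVec, ← mulVec_transpose, hS.eq, dotProduct_comm]
  rw [mulVec_add, dotProduct_add, sub_dotProduct, sub_dotProduct, hxy]
  ring

theorem sub_eq_dotProduct_integral_partialGradients {ι : Type*} [Fintype ι]
    {F : (ι → ℝ) × (ι → ℝ) → ℝ} (hF : ContDiff ℝ 1 F) {Fu Fv : (ι → ℝ) × (ι → ℝ) → ι → ℝ}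
    (hFu : ∀ p w, fderiv ℝ F p (w, 0) = Fu p ⬝ᵥ w)
    (hFv : ∀ p w, fderiv ℝ F p (0, w) = Fv p ⬝ᵥ w) (a b : (ι → ℝ) × (ι → ℝ)) :
    F b - F a = (b.1 - a.1) ⬝ᵥ (∫ ξ in (0 : ℝ)..1, Fu ((1 - ξ) • a + ξ • b)) +
      (b.2 - a.2) ⬝ᵥ ∫ ξ in (0 : ℝ)..1, Fv ((1 - ξ) • a + ξ • b) := by
  have hγ : Continuous fun ξ : ℝ => (1 - ξ) • a + ξ • b := by fun_prop
  have hu : Continuous fun ξ : ℝ => Fu ((1 - ξ) • a + ξ • b) :=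
    (continuous_of_fderiv_comp_eq_dotProduct hF (.inl ℝ _ _) hFu).comp hγ
  have hv : Continuous fun ξ : ℝ => Fv ((1 - ξ) • a + ξ • b) :=
    (continuous_of_fderiv_comp_eq_dotProduct hF (.inr ℝ _ _) hFv).comp hγ
  rw [← intervalIntegral_dotProduct (hu.intervalIntegrable 0 1),
    ← intervalIntegral_dotProduct (hv.intervalIntegrable 0 1),
    ← intervalIntegral.integral_add ((continuous_const.dotProduct hu).intervalIntegrable 0 1)
      ((continuous_const.dotProduct hv).intervalIntegrable 0 1),
    ← integral_fderiv_segment_eq_sub hF a b]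
  refine intervalIntegral.integral_congr fun ξ _ => ?_
  have hba : b - a = (b.1 - a.1, 0) + (0, b.2 - a.2) := by ext <;> simp
  rw [hba, map_add, hFu, hFv, dotProduct_comm, dotProduct_comm (Fv _)]

theorem div_mul_dotProduct_mulVec_eq_of_avf_step {ι : Type*} [Fintype ι] {S M : Matrix ι ι ℝ}
    (hS : S.IsSymm) {τ Δt : ℝ} (hΔt : Δt ≠ 0) {x x' g : ι → ℝ}
    (h : τ • M *ᵥ (x' - x) = Δt • (-((1/2 : ℝ) • S *ᵥ (x' + x)) + g)) :
    τ / Δt * ((x' - x) ⬝ᵥ M *ᵥ (x' - x)) =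
      -(1/2) * (x' ⬝ᵥ S *ᵥ x' - x ⬝ᵥ S *ᵥ x) + (x' - x) ⬝ᵥ g := by
  have h' := congrArg ((x' - x) ⬝ᵥ ·) h
  simp only [dotProduct_smul, dotProduct_add, dotProduct_neg, smul_eq_mul,
    hS.sub_dotProduct_mulVec_add] at h'
  rw [div_mul_eq_mul_div, div_eq_iff hΔt]
  linear_combination h'

theorem avf_skew_gradient_energy_balance_general (N : ℕ)
    (S₁ S₂ M : Matrix (Fin N) (Fin N) ℝ)
    (hS₁ : S₁.IsSymm) (hS₂ : S₂.IsSymm)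
    (τ₁ τ₂ Δt : ℝ) (hΔt : 0 < Δt)
    (F : (Fin N → ℝ) × (Fin N → ℝ) → ℝ) (hF : ContDiff ℝ 1 F)
    -- `Fu p` and `Fv p` are the partial gradients `∇_u F` and `∇_v F` at `p`
    (Fu Fv : (Fin N → ℝ) × (Fin N → ℝ) → (Fin N → ℝ))
    (hFu : ∀ p : (Fin N → ℝ) × (Fin N → ℝ), ∀ w : Fin N → ℝ,
      fderiv ℝ F p (w, 0) = Fu p ⬝ᵥ w)
    (hFv : ∀ p : (Fin N → ℝ) × (Fin N → ℝ), ∀ w : Fin N → ℝ,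
      fderiv ℝ F p (0, w) = Fv p ⬝ᵥ w)
    (u v u' v' : Fin N → ℝ)
    -- the AVF scheme for the u-equation
    (havfu : τ₁ • M.mulVec (u' - u) =
      Δt • (-((1/2 : ℝ) • S₁.mulVec (u' + u)) +
        ∫ ξ in (0:ℝ)..1, Fu ((1 - ξ) • (u, v) + ξ • (u', v'))))
    -- the AVF scheme for the v-equation
    (havfv : τ₂ • M.mulVec (v' - v) =
      Δt • (-((1/2 : ℝ) • S₂.mulVec (v' + v)) -
        ∫ ξ in (0:ℝ)..1, Fv ((1 - ξ) • (u, v) + ξ • (u', v')))) :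
    ((1/2) * (u' ⬝ᵥ S₁.mulVec u') - (1/2) * (v' ⬝ᵥ S₂.mulVec v') - F (u', v')) -
    ((1/2) * (u ⬝ᵥ S₁.mulVec u) - (1/2) * (v ⬝ᵥ S₂.mulVec v) - F (u, v)) =
      -(τ₁ / Δt) * ((u' - u) ⬝ᵥ M.mulVec (u' - u)) +
       (τ₂ / Δt) * ((v' - v) ⬝ᵥ M.mulVec (v' - v)) := by
  have hu := div_mul_dotProduct_mulVec_eq_of_avf_step hS₁ hΔt.ne' havfu
  have hv := div_mul_dotProduct_mulVec_eq_of_avf_step hS₂ hΔt.ne'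
    (havfv.trans (congrArg _ (sub_eq_add_neg _ _)))
  have hpot := sub_eq_dotProduct_integral_partialGradients hF hFu hFv (u, v) (u', v')
  rw [dotProduct_neg] at hv
  linear_combination hu - hv - hpot

/-- Exact discrete energy balance for the AVF scheme applied to a semi-discretized
skew-gradient system: `E(u⁺,v⁺) - E(u,v) = -(τ₁/Δt)(u⁺-u)ᵀM(u⁺-u) + (τ₂/Δt)(v⁺-v)ᵀM(v⁺-v)`,
where `E(u,v) = ½uᵀS₁u - ½vᵀS₂v - F(u,v)`. -/
theorem avf_skew_gradient_energy_balance (N : ℕ) (hN : 1 ≤ N)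
    (S₁ S₂ M : Matrix (Fin N) (Fin N) ℝ)
    (hS₁ : S₁.IsSymm) (hS₂ : S₂.IsSymm) (hMsym : M.IsSymm) (hM : M.PosDef)
    (τ₁ τ₂ Δt : ℝ) (hτ₁ : 0 < τ₁) (hτ₂ : 0 < τ₂) (hΔt : 0 < Δt)
    (F : (Fin N → ℝ) × (Fin N → ℝ) → ℝ) (hF : ContDiff ℝ 1 F)
    -- `Fu p` and `Fv p` are the partial gradients `∇_u F` and `∇_v F` at `p`
    (Fu Fv : (Fin N → ℝ) × (Fin N → ℝ) → (Fin N → ℝ))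
    (hFu : ∀ p : (Fin N → ℝ) × (Fin N → ℝ), ∀ w : Fin N → ℝ,
      fderiv ℝ F p (w, 0) = Fu p ⬝ᵥ w)
    (hFv : ∀ p : (Fin N → ℝ) × (Fin N → ℝ), ∀ w : Fin N → ℝ,
      fderiv ℝ F p (0, w) = Fv p ⬝ᵥ w)
    (u v u' v' : Fin N → ℝ)
    -- the AVF scheme for the u-equation
    (havfu : τ₁ • M.mulVec (u' - u) =
      Δt • (-((1/2 : ℝ) • S₁.mulVec (u' + u)) +
        ∫ ξ in (0:ℝ)..1, Fu ((1 - ξ) • (u, v) + ξ • (u', v'))))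
    -- the AVF scheme for the v-equation
    (havfv : τ₂ • M.mulVec (v' - v) =
      Δt • (-((1/2 : ℝ) • S₂.mulVec (v' + v)) -
        ∫ ξ in (0:ℝ)..1, Fv ((1 - ξ) • (u, v) + ξ • (u', v')))) :
    ((1/2) * (u' ⬝ᵥ S₁.mulVec u') - (1/2) * (v' ⬝ᵥ S₂.mulVec v') - F (u', v')) -
    ((1/2) * (u ⬝ᵥ S₁.mulVec u) - (1/2) * (v ⬝ᵥ S₂.mulVec v) - F (u, v)) =
      -(τ₁ / Δt) * ((u' - u) ⬝ᵥ M.mulVec (u' - u)) +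
       (τ₂ / Δt) * ((v' - v) ⬝ᵥ M.mulVec (v' - v)) :=
  avf_skew_gradient_energy_balance_general N S₁ S₂ M hS₁ hS₂ τ₁ τ₂ Δt hΔt F hF Fu Fv hFu hFv u v u'
    v' havfu havfv
end

section
/- Let H : ℝᴺ → ℝ be continuously differentiable, let J be a real skew-symmetric N×N matrix (Jᵀ = -J), let Δt > 0, and suppose y, y⁺ ∈ ℝᴺ satisfy the AVF scheme y⁺ = y + Δt · J ∫₀¹ ∇H((1-ξ) y + ξ y⁺) dξ. Then H(y⁺) = H(y), i.e. the average vector field method exactly preserves the energy of Hamiltonian systems ẏ = J ∇H(y). -/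
/-!
By the fundamental theorem of calculus along the segment from `y` to `y⁺`, the averaged gradient
`ḡ = ∫₀¹ ∇H((1-ξ)y + ξy⁺) dξ` is a discrete gradient: `H(y⁺) - H(y) = ḡ ⬝ (y⁺ - y)`.
The scheme says `y⁺ - y = Δt J ḡ`, and `ḡ ⬝ J ḡ = 0` because `J` is skew-symmetric.
-/

open Matrix

theorem Matrix.dotProduct_mulVec_self_eq_zero_of_transpose_eq_neg {n R : Type*} [Fintype n]
    [CommRing R] [IsAddTorsionFree R] {J : Matrix n n R} (hJ : Jᵀ = -J) (v : n → R) :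
    v ⬝ᵥ J *ᵥ v = 0 :=
  self_eq_neg.mp <| calc
    v ⬝ᵥ J *ᵥ v = Jᵀ *ᵥ v ⬝ᵥ v := by rw [dotProduct_mulVec, mulVec_transpose]
    _ = -(v ⬝ᵥ J *ᵥ v) := by rw [hJ, neg_mulVec, neg_dotProduct, dotProduct_comm]

theorem intervalIntegral.integral_dotProduct_const {ι : Type*} [Fintype ι] {f : ℝ → ι → ℝ}
    {a b : ℝ} {μ : MeasureTheory.Measure ℝ} (hf : IntervalIntegrable f μ a b) (v : ι → ℝ) :
    ∫ x in a..b, f x ⬝ᵥ v ∂μ = (∫ x in a..b, f x ∂μ) ⬝ᵥ v :=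
  (LinearMap.toContinuousLinearMap ((dotProductBilin ℝ ℝ).flip v)).intervalIntegral_comp_comm hf

theorem ContDiff.integral_fderiv_lineMap_eq_sub {E F : Type*} [NormedAddCommGroup E]
    [NormedSpace ℝ E] [NormedAddCommGroup F] [NormedSpace ℝ F] [CompleteSpace F] {H : E → F}
    (hH : ContDiff ℝ 1 H) (y y' : E) :
    ∫ ξ in (0 : ℝ)..1, fderiv ℝ H ((1 - ξ) • y + ξ • y') (y' - y) = H y' - H y := by
  have hderiv (ξ : ℝ) :
      HasDerivAt (H ∘ AffineMap.lineMap y y') (fderiv ℝ H ((1 - ξ) • y + ξ • y') (y' - y)) ξ := by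
    rw [← AffineMap.lineMap_apply_module]
    exact (hH.differentiable one_ne_zero _).hasFDerivAt.comp_hasDerivAt ξ
      AffineMap.hasDerivAt_lineMap
  have hcont : Continuous fun ξ : ℝ => fderiv ℝ H ((1 - ξ) • y + ξ • y') (y' - y) := by
    have := hH.continuous_fderiv one_ne_zero
    fun_prop
  rw [intervalIntegral.integral_eq_sub_of_hasDerivAt (fun ξ _ => hderiv ξ)
    (hcont.intervalIntegrable 0 1)]
  simp

theorem ContDiff.continuous_of_fderiv_apply_eq_dotProduct {ι : Type*} [Fintype ι] [DecidableEq ι]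
    {H : (ι → ℝ) → ℝ} (hH : ContDiff ℝ 1 H) {gH : (ι → ℝ) → ι → ℝ}
    (hgH : ∀ y w, fderiv ℝ H y w = gH y ⬝ᵥ w) : Continuous gH := by
  have hgH_eq : gH = fun y i => fderiv ℝ H y (Pi.single i 1) := by
    ext y i
    rw [hgH, dotProduct_single, mul_one]
  have := hH.continuous_fderiv one_ne_zero
  rw [hgH_eq]
  fun_prop

theorem ContDiff.integral_gradient_lineMap_dotProduct_sub {ι : Type*} [Fintype ι]
    [DecidableEq ι] {H : (ι → ℝ) → ℝ} (hH : ContDiff ℝ 1 H) {gH : (ι → ℝ) → ι → ℝ}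
    (hgH : ∀ y w, fderiv ℝ H y w = gH y ⬝ᵥ w) (y y' : ι → ℝ) :
    (∫ ξ in (0 : ℝ)..1, gH ((1 - ξ) • y + ξ • y')) ⬝ᵥ (y' - y) = H y' - H y := by
  have hint : IntervalIntegrable (fun ξ : ℝ => gH ((1 - ξ) • y + ξ • y')) MeasureTheory.volume 0 1 :=
    ((hH.continuous_of_fderiv_apply_eq_dotProduct hgH).comp (by fun_prop)).intervalIntegrable 0 1
  simp only [← intervalIntegral.integral_dotProduct_const hint, ← hgH,
    hH.integral_fderiv_lineMap_eq_sub]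

theorem avf_hamiltonian_energy_preservation_general (N : ℕ)
    (H : (Fin N → ℝ) → ℝ) (hH : ContDiff ℝ 1 H)
    -- `gH y` is the gradient `∇H(y)`
    (gH : (Fin N → ℝ) → (Fin N → ℝ))
    (hgH : ∀ y w : Fin N → ℝ, fderiv ℝ H y w = gH y ⬝ᵥ w)
    (J : Matrix (Fin N) (Fin N) ℝ) (hJ : Jᵀ = -J)
    (Δt : ℝ)
    (y y' : Fin N → ℝ)
    (havf : y' = y + Δt • J.mulVec (∫ ξ in (0:ℝ)..1, gH ((1 - ξ) • y + ξ • y'))) :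
    H y' = H y := by
  set g := ∫ ξ in (0:ℝ)..1, gH ((1 - ξ) • y + ξ • y')
  have hstep : y' - y = Δt • J *ᵥ g := by
    rw [sub_eq_iff_eq_add', havf]
  rw [← sub_eq_zero, ← hH.integral_gradient_lineMap_dotProduct_sub hgH, hstep, dotProduct_smul,
    dotProduct_mulVec_self_eq_zero_of_transpose_eq_neg hJ, smul_zero]

/-- The AVF method exactly preserves the energy of Hamiltonian systems `ẏ = J∇H(y)`
with `J` skew-symmetric: if `y⁺ = y + Δt·J ∫₀¹ ∇H((1-ξ)y + ξy⁺) dξ` then `H(y⁺) = H(y)`. -/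
theorem avf_hamiltonian_energy_preservation (N : ℕ) (hN : 1 ≤ N)
    (H : (Fin N → ℝ) → ℝ) (hH : ContDiff ℝ 1 H)
    -- `gH y` is the gradient `∇H(y)`
    (gH : (Fin N → ℝ) → (Fin N → ℝ))
    (hgH : ∀ y w : Fin N → ℝ, fderiv ℝ H y w = gH y ⬝ᵥ w)
    (J : Matrix (Fin N) (Fin N) ℝ) (hJ : Jᵀ = -J)
    (Δt : ℝ) (hΔt : 0 < Δt)
    (y y' : Fin N → ℝ)
    (havf : y' = y + Δt • J.mulVec (∫ ξ in (0:ℝ)..1, gH ((1 - ξ) • y + ξ • y'))) :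
    H y' = H y :=
  avf_hamiltonian_energy_preservation_general N H hH gH hgH J hJ Δt y y' havf
end

section
/- Let V : ℝᴺ → ℝ be continuously differentiable, let Δt > 0, and suppose y, y⁺ ∈ ℝᴺ satisfy the AVF scheme for the gradient system ẏ = -∇V(y), i.e. y⁺ = y - Δt ∫₀¹ ∇V((1-ξ) y + ξ y⁺) dξ. Then V(y⁺) - V(y) = -(1/Δt) ‖y⁺ - y‖², and in particular V(y⁺) ≤ V(y); the average vector field method exactly preserves the energy dissipation of gradient systems. -/
/-!
By the fundamental theorem of calculus along the segment from `y` to `y⁺`,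
`V(y⁺) - V(y) = ⟪y⁺ - y, ∫₀¹ ∇V((1-ξ) y + ξ y⁺) dξ⟫`, and the AVF relation says that this averaged
gradient is exactly `-(y⁺ - y) / Δt`.
-/

open intervalIntegral AffineMap
open scoped InnerProductSpace

section

variable {E : Type*} [NormedAddCommGroup E] [InnerProductSpace ℝ E] [CompleteSpace E]

theorem sub_eq_inner_integral_gradient_lineMap {f : E → ℝ} {g : E → E}
    (hf : ∀ z, HasGradientAt f (g z) z) {x y : E}
    (hg : IntervalIntegrable (fun t : ℝ => g (lineMap x y t)) MeasureTheory.volume 0 1) :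
    f y - f x = ⟪y - x, ∫ t in (0 : ℝ)..1, g (lineMap x y t)⟫_ℝ := by
  have hderiv : ∀ t ∈ Set.uIcc (0 : ℝ) 1,
      HasDerivAt (fun t => f (lineMap x y t)) ⟪y - x, g (lineMap x y t)⟫_ℝ t := fun t _ => by
    simpa [Function.comp_def, real_inner_comm] using
      (hf (lineMap x y t)).hasFDerivAt.comp_hasDerivAt t hasDerivAt_lineMap
  have hint : IntervalIntegrable (fun t => ⟪y - x, g (lineMap x y t)⟫_ℝ) MeasureTheory.volume 0 1 :=
    ⟨hg.1.const_inner _, hg.2.const_inner _⟩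
  calc f y - f x = ∫ t in (0 : ℝ)..1, ⟪y - x, g (lineMap x y t)⟫_ℝ := by
        simpa using (integral_eq_sub_of_hasDerivAt hderiv hint).symm
    _ = ⟪y - x, ∫ t in (0 : ℝ)..1, g (lineMap x y t)⟫_ℝ :=
        (innerSL ℝ (y - x)).intervalIntegral_comp_comm hg

theorem avf_gradient_step_energy_eq {f : E → ℝ} {g : E → E} (hf : ∀ z, HasGradientAt f (g z) z)
    {h : ℝ} (hh : h ≠ 0) {y y' : E}
    (havf : y' = y - h • ∫ t in (0 : ℝ)..1, g (lineMap y y' t)) :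
    f y' - f y = -(1 / h) * ‖y' - y‖ ^ 2 := by
  by_cases hg : IntervalIntegrable (fun t : ℝ => g (lineMap y y' t)) MeasureTheory.volume 0 1
  · rw [sub_eq_inner_integral_gradient_lineMap hf hg]
    set I := ∫ t in (0 : ℝ)..1, g (lineMap y y' t)
    have hmean : I = -(1 / h) • (y' - y) := by
      rw [havf, sub_sub_cancel_left, smul_neg, neg_smul, neg_neg, smul_smul,
        one_div_mul_cancel hh, one_smul]
    rw [hmean, real_inner_smul_right, real_inner_self_eq_norm_sq]
  · -- the integral is the junk value `0`, so `y' = y`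
    rw [integral_undef hg, smul_zero, sub_zero] at havf
    simp [havf]

end

theorem avf_gradient_system_energy_dissipation_general (N : ℕ)
    (V : EuclideanSpace ℝ (Fin N) → ℝ)
    (gV : EuclideanSpace ℝ (Fin N) → EuclideanSpace ℝ (Fin N))
    (hgV : ∀ y : EuclideanSpace ℝ (Fin N), HasGradientAt V (gV y) y)
    (Δt : ℝ) (hΔt : 0 < Δt)
    (y y' : EuclideanSpace ℝ (Fin N))
    (havf : y' = y - Δt • ∫ ξ in (0:ℝ)..1, gV ((1 - ξ) • y + ξ • y')) :
    V y' - V y = -(1/Δt) * ‖y' - y‖^2 ∧ V y' ≤ V y := by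
  have key : V y' - V y = -(1 / Δt) * ‖y' - y‖ ^ 2 :=
    avf_gradient_step_energy_eq hgV hΔt.ne' (by simpa only [lineMap_apply_module] using havf)
  refine ⟨key, sub_nonpos.mp ?_⟩
  rw [key]
  exact mul_nonpos_of_nonpos_of_nonneg (by simpa using hΔt.le) (sq_nonneg _)

/-- The AVF method exactly preserves the energy dissipation of gradient systems
`ẏ = -∇V(y)`: if `y⁺ = y - Δt ∫₀¹ ∇V((1-ξ)y + ξy⁺) dξ` then
`V(y⁺) - V(y) = -(1/Δt)‖y⁺ - y‖²`, in particular `V(y⁺) ≤ V(y)`. -/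
theorem avf_gradient_system_energy_dissipation (N : ℕ) (hN : 1 ≤ N)
    (V : EuclideanSpace ℝ (Fin N) → ℝ) (hV : ContDiff ℝ 1 V)
    (gV : EuclideanSpace ℝ (Fin N) → EuclideanSpace ℝ (Fin N))
    (hgV : ∀ y : EuclideanSpace ℝ (Fin N), HasGradientAt V (gV y) y)
    (Δt : ℝ) (hΔt : 0 < Δt)
    (y y' : EuclideanSpace ℝ (Fin N))
    (havf : y' = y - Δt • ∫ ξ in (0:ℝ)..1, gV ((1 - ξ) • y + ξ • y')) :
    V y' - V y = -(1/Δt) * ‖y' - y‖^2 ∧ V y' ≤ V y :=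
  avf_gradient_system_energy_dissipation_general N V gV hgV Δt hΔt y y' havf
end
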